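/- Word normalization of the decreasing encoding: let a be a nonempty word of distinct positive integers with maximum letter κ, and write a = a_L κ a_R. Then, modulo I: if a_L and a_R are both nonempty, f(a) =_I (2^κ ∘_2 f(a_R)) ∘_1 f(a_L); if a_L = ∅, f(a) =_I 2^κ ∘_2 f(a_R); if a_R = ∅, f(a) =_I 2^κ ∘_1 f(a_L); and if a consists of the single letter κ, f(a) = 2^κ. -/

import Mathlib

/-- Indexed terms of the language `L^I`: generators `2^k` and partial compositions. -/
inductive Trm : Type
  | gen : ℕ → Trm
  | comp : Trm → ℕ → Trm → Trm
deriving DecidableEq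

namespace Trm

/-- Arity `|A|`. -/
def arity : Trm → ℕ
  | gen _ => 2
  | comp A _ B => A.arity + B.arity - 1

/-- Set of indices occurring in a term. -/
def ind : Trm → Finset ℕ
  | gen k => {k}
  | comp A _ B => A.ind ∪ B.ind

/-- Root index. -/
def root : Trm → ℕ
  | gen k => k
  | comp A _ _ => A.root

/-- Number of occurrences of the generator. -/
def countGen : Trm → ℕ
  | gen _ => 1
  | comp A _ B => A.countGen + B.countGen

end Trm

/-- The congruence `=_I` generated by (assoc1) and (assoc2). -/
inductive IEq : Trm → Trm → Prop
  | refl (A : Trm) : IEq A A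
  | symm {A B} : IEq A B → IEq B A
  | trans {A B C} : IEq A B → IEq B C → IEq A C
  | congr {A A' B B'} (n : ℕ) : IEq A A' → IEq B B' →
      IEq (Trm.comp A n B) (Trm.comp A' n B')
  | assoc1 (A B C : Trm) (n m : ℕ) : n ≤ m → m < n + B.arity →
      IEq (Trm.comp (Trm.comp A n B) m C) (Trm.comp A n (Trm.comp B (m - n + 1) C))
  | assoc2 (A B C : Trm) (n m : ℕ) : n + B.arity ≤ m →
      IEq (Trm.comp (Trm.comp A n B) m C) (Trm.comp (Trm.comp A (m - B.arity + 1) C) n B)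

/-- Planar binary trees. -/
inductive BT : Type
  | leaf : BT
  | node : BT → BT → BT
deriving DecidableEq

namespace BT

/-- Number of leaves. -/
def leaves : BT → ℕ
  | leaf => 1
  | node l r => l.leaves + r.leaves

/-- Graft `S` at the `i`-th leaf (1-indexed) of a tree. -/
def graft : BT → ℕ → BT → BT
  | leaf, _, S => S
  | node l r, i, S =>
    if i ≤ l.leaves then node (l.graft i S) r else node l (r.graft (i - l.leaves) S)

end BT

/-- Evaluation `ε` of indexed terms to planar binary trees. -/
def Trm.eval : Trm → BT
  | Trm.gen _ => BT.node BT.leaf BT.leaf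
  | Trm.comp A i B => A.eval.graft i B.eval

/-- `l`-factors. -/
inductive LFactor : Trm → Prop
  | gen (k : ℕ) : LFactor (Trm.gen k)
  | step {A : Trm} (j : ℕ) : LFactor A → j ∉ A.ind →
      LFactor (Trm.comp A ((A.ind.filter (· < j)).card + 1) (Trm.gen j))

/-- Auxiliary for the head-insertion encoding: `done` is the list of already
inserted letters. -/
def hAux : Trm → List ℕ → List ℕ → Trm
  | A, _, [] => A
  | A, done, y :: rest =>
      hAux (Trm.comp A ((done.filter (· < y)).length + 1) (Trm.gen y)) (done ++ [y]) rest

/-- Head-insertion encoding `h` (junk value on the empty word). -/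
def hWord : List ℕ → Trm
  | [] => Trm.gen 0
  | x :: rest => hAux (Trm.gen x) [x] rest

/-- `u_a(x)`: number of letters to the left of `x` in `a` that are greater than `x`. -/
def uCount (a : List ℕ) (x : ℕ) : ℕ := ((a.takeWhile (· ≠ x)).filter (x < ·)).length

/-- Decreasing rearrangement of a word. -/
def sortDesc (a : List ℕ) : List ℕ := (a.mergeSort (· ≤ ·)).reverse

/-- Decreasing encoding `f` (junk value on the empty word). -/
def fWord (a : List ℕ) : Trm :=
  match sortDesc a with
  | [] => Trm.gen 0
  | k :: rest => rest.foldl (fun A x => Trm.comp A (uCount a x + 1) (Trm.gen x)) (Trm.gen k)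

/-- Standardization of a word of distinct integers. -/
def std (a : List ℕ) : List ℕ := a.map (fun x => (a.filter (· ≤ x)).length)

/-- Tonks' vertex map, splitting form `φ`. -/
def tonksPhi (a : List ℕ) : BT :=
  match ha : a.getLast? with
  | none => BT.leaf
  | some x =>
      BT.node (tonksPhi (std (a.filter (· < x)))) (tonksPhi (std (a.filter (x < ·))))
termination_by a.length
decreasing_by
  · have hx : x ∈ a := List.mem_of_mem_getLast? (Option.mem_def.mpr ha)
    have : (a.filter (· < x)).length < a.length := by
      apply List.length_filter_lt_length_iff_exists.2
      exact ⟨x, hx, by simp⟩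
    simp [std]
    rw [← List.length_attach (l := a)]
    apply List.length_filter_lt_length_iff_exists.2
    exact ⟨⟨x, hx⟩, List.mem_attach _ _, by simp⟩
  · have hx : x ∈ a := List.mem_of_mem_getLast? (Option.mem_def.mpr ha)
    have : (a.filter (x < ·)).length < a.length := by
      apply List.length_filter_lt_length_iff_exists.2
      exact ⟨x, hx, by simp⟩
    simp [std]
    rw [← List.length_attach (l := a)]
    apply List.length_filter_lt_length_iff_exists.2
    exact ⟨⟨x, hx⟩, List.mem_attach _ _, by simp⟩

/-- Tonks' vertex map, head-grafting form `φ̂`. -/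
def phiHat : List ℕ → BT
  | [] => BT.leaf
  | x :: rest => (phiHat (std rest)).graft x (BT.node BT.leaf BT.leaf)
termination_by a => a.length
decreasing_by
  simp [std]

/-- The Loday–Ronco map `ψ`. -/
def lodayPsi (a : List ℕ) : BT :=
  match hm : a.maximum with
  | none => BT.leaf
  | some m =>
      let i := a.idxOf m
      BT.node (lodayPsi (std (a.take i))) (lodayPsi (std (a.drop (i + 1))))
termination_by a.length
decreasing_by
  · have hmem : m ∈ a := List.maximum_mem hm
    have hi : a.idxOf m < a.length := List.idxOf_lt_length_iff.2 hmem
    simp only [std, List.length_map, List.length_take]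
    omega
  · have : a ≠ [] := by rintro rfl; simp [List.maximum] at hm
    have : 0 < a.length := List.length_pos_iff.2 this
    simp only [std, List.length_map, List.length_drop]
    omega

/-- Inverse of a permutation word on `{1,…,n}`. -/
def invWord (π : List ℕ) : List ℕ :=
  (List.range π.length).map (fun j => π.idxOf (j + 1) + 1)

/-- One Tamari (right rotation) step, at any subtree. -/
inductive TamariStep : BT → BT → Prop
  | rot (X Y Z : BT) : TamariStep (BT.node (BT.node X Y) Z) (BT.node X (BT.node Y Z))
  | left {l l'} (r : BT) : TamariStep l l' → TamariStep (BT.node l r) (BT.node l' r)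
  | right (l : BT) {r r'} : TamariStep r r' → TamariStep (BT.node l r) (BT.node l r')

/-- The Tamari order. -/
def TamariLE : BT → BT → Prop := Relation.ReflTransGen TamariStep

/-- The strict Tamari order. -/
def TamariLT : BT → BT → Prop := Relation.TransGen TamariStep

/-- One cover of the right weak Bruhat order on words. -/
inductive BruhatStep : List ℕ → List ℕ → Prop
  | swap (α : List ℕ) {u v : ℕ} (β : List ℕ) : u < v →
      BruhatStep (α ++ u :: v :: β) (α ++ v :: u :: β)

/-- The right weak Bruhat order on words. -/
def BruhatLE : List ℕ → List ℕ → Prop := Relation.ReflTransGen BruhatStep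

/-- Head-insertion index `k(a; σ)`. -/
def kIdx (a : ℕ) (σ : List ℕ) : ℕ := 1 + (σ.filter (· < a)).length


/-!
Induction on the length of the word, removing its smallest letter `m`. The decreasing encoding
inserts `m` last, so `f(a) = f(a ∖ m) ∘_{u_a(m)+1} 2^m`, where `u_a(m)` is read off the position of
`m` in `a_L`, or in `a_R` after the `|a_L| + 1` larger letters to its left. One application of
(assoc1), preceded by one of (assoc2) when `m` lies in `a_R`, then moves `2^m` inside `f(a_L)` or
`f(a_R)`. The four cases are handled at once by encoding the empty word as `none : Option Trm`,
the unit of arity one, for which both partial compositions are the identity.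
-/

theorem uCount_cons_self (x : ℕ) (l : List ℕ) : uCount (x :: l) x = 0 := by
  simp [uCount]

theorem uCount_cons_of_ne {x y : ℕ} (h : y ≠ x) (l : List ℕ) :
    uCount (y :: l) x = uCount l x + if x < y then 1 else 0 := by
  by_cases hxy : x < y <;> simp [uCount, h, hxy]

theorem uCount_lt_length {x : ℕ} {l : List ℕ} (hx : x ∈ l) : uCount l x < l.length := by
  induction l with
  | nil => cases hx
  | cons y l ih =>
    by_cases hyx : y = x
    · simp [hyx, uCount_cons_self]
    · have := ih ((List.mem_cons.1 hx).resolve_left (Ne.symm hyx))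
      rw [uCount_cons_of_ne hyx]
      split_ifs <;> simp <;> omega

theorem uCount_append_of_mem {x : ℕ} {l₁ : List ℕ} (hx : x ∈ l₁) (l₂ : List ℕ) :
    uCount (l₁ ++ l₂) x = uCount l₁ x := by
  induction l₁ with
  | nil => cases hx
  | cons y l ih =>
    by_cases hyx : y = x
    · simp [hyx, uCount_cons_self]
    · rw [List.cons_append, uCount_cons_of_ne hyx, uCount_cons_of_ne hyx,
        ih ((List.mem_cons.1 hx).resolve_left (Ne.symm hyx))]

theorem uCount_append_of_forall_lt {x : ℕ} {l₁ : List ℕ} (hx : ∀ y ∈ l₁, x < y) (l₂ : List ℕ) :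
    uCount (l₁ ++ l₂) x = l₁.length + uCount l₂ x := by
  induction l₁ with
  | nil => simp
  | cons y l ih =>
    have hxy := hx y List.mem_cons_self
    rw [List.cons_append, uCount_cons_of_ne hxy.ne',
      ih fun z hz => hx z (List.mem_cons_of_mem _ hz),
      if_pos hxy, List.length_cons]
    omega

theorem uCount_append_cons_of_forall_lt {x κ : ℕ} {l₁ : List ℕ} (hx : ∀ y ∈ l₁, x < y)
    (hκ : x < κ) (l₂ : List ℕ) : uCount (l₁ ++ κ :: l₂) x = l₁.length + 1 + uCount l₂ x := by
  rw [← List.singleton_append, ← List.append_assoc, uCount_append_of_forall_lt, List.length_append,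
    List.length_singleton]
  simpa [or_imp, forall_and, hκ] using hx

theorem uCount_erase_of_lt {m x : ℕ} (h : m < x) (l : List ℕ) :
    uCount (l.erase m) x = uCount l x := by
  induction l with
  | nil => simp
  | cons y l ih =>
    by_cases hym : y = m
    · subst hym
      rw [List.erase_cons_head, uCount_cons_of_ne h.ne, if_neg (Nat.not_lt.2 h.le), add_zero]
    · rw [List.erase_cons_tail (by simpa using hym)]
      by_cases hyx : y = x
      · simp [hyx, uCount_cons_self]
      · rw [uCount_cons_of_ne hyx, uCount_cons_of_ne hyx, ih]

theorem sortDesc_perm (a : List ℕ) : (sortDesc a).Perm a :=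
  (List.reverse_perm _).trans (List.mergeSort_perm a _)

theorem sortDesc_ne_nil {a : List ℕ} (ha : a ≠ []) : sortDesc a ≠ [] :=
  fun h => ha (List.Perm.nil_eq (h ▸ sortDesc_perm a)).symm

theorem mergeSort_eq_cons_erase_of_forall_le {a : List ℕ} {m : ℕ} (hm : m ∈ a)
    (hmin : ∀ x ∈ a, m ≤ x) : a.mergeSort (· ≤ ·) = m :: (a.erase m).mergeSort (· ≤ ·) := by
  refine List.Perm.eq_of_sortedLE List.sortedLE_mergeSort ?_ ?_
  · refine List.sortedLE_iff_pairwise.2 (List.pairwise_cons.2 ⟨fun x hx => ?_,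
      List.sortedLE_iff_pairwise.1 List.sortedLE_mergeSort⟩)
    exact hmin x (List.mem_of_mem_erase ((List.mergeSort_perm _ _).mem_iff.1 hx))
  · exact (List.mergeSort_perm _ _).trans
      ((List.perm_cons_erase hm).trans ((List.mergeSort_perm _ _).symm.cons m))

theorem sortDesc_eq_sortDesc_erase_append {a : List ℕ} {m : ℕ} (hm : m ∈ a)
    (hmin : ∀ x ∈ a, m ≤ x) : sortDesc a = sortDesc (a.erase m) ++ [m] := by
  simp [sortDesc, mergeSort_eq_cons_erase_of_forall_le hm hmin]


instance : Trans IEq IEq IEq := ⟨IEq.trans⟩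

namespace Trm

def arityOpt : Option Trm → ℕ
  | none => 1
  | some A => A.arity

def compOpt (A : Trm) (n : ℕ) : Option Trm → Trm
  | none => A
  | some B => comp A n B

def optComp : Option Trm → ℕ → Trm → Trm
  | none, _, C => C
  | some A, n, C => comp A n C

end Trm

open Trm

theorem IEq.compOpt_congr {A A' : Trm} (h : IEq A A') (n : ℕ) (X : Option Trm) :
    IEq (compOpt A n X) (compOpt A' n X) := by
  cases X with
  | none => exact h
  | some B => exact h.congr n (IEq.refl B)

theorem IEq.assoc1_opt (A : Trm) (X : Option Trm) (C : Trm) (n m : ℕ) (hnm : n ≤ m)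
    (hm : m < n + arityOpt X) :
    IEq (comp (compOpt A n X) m C) (comp A n (optComp X (m - n + 1) C)) := by
  cases X with
  | none =>
    obtain rfl : m = n := by simp only [arityOpt] at hm; omega
    exact IEq.refl _
  | some B => exact IEq.assoc1 A B C n m hnm hm

theorem IEq.assoc2_opt (A : Trm) (X : Option Trm) (C : Trm) (n m : ℕ) (hm : n + arityOpt X ≤ m) :
    IEq (comp (compOpt A n X) m C) (compOpt (comp A (m - arityOpt X + 1) C) n X) := by
  cases X with
  | none =>
    simp only [arityOpt] at hm ⊢
    rw [Nat.sub_add_cancel (by omega)]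
    exact IEq.refl _
  | some B => exact IEq.assoc2 A B C n m hm

theorem arity_foldl_comp_gen (p : ℕ → ℕ) (L : List ℕ) (A : Trm) :
    (L.foldl (fun A x => comp A (p x) (gen x)) A).arity = A.arity + L.length := by
  induction L generalizing A with
  | nil => simp
  | cons x L ih => simp only [List.foldl_cons, ih, arity, List.length_cons]; omega

theorem fWord_of_sortDesc_eq_cons {a rest : List ℕ} {k : ℕ} (h : sortDesc a = k :: rest) :
    fWord a = rest.foldl (fun A x => comp A (uCount a x + 1) (gen x)) (gen k) := by
  rw [fWord, h]

theorem fWord_arity {a : List ℕ} (ha : a ≠ []) : (fWord a).arity = a.length + 1 := by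
  obtain ⟨k, rest, h⟩ := List.exists_cons_of_ne_nil (sortDesc_ne_nil ha)
  have hlen := (sortDesc_perm a).length_eq
  rw [h, List.length_cons] at hlen
  rw [fWord_of_sortDesc_eq_cons h, arity_foldl_comp_gen, arity]
  omega

theorem fWord_singleton (k : ℕ) : fWord [k] = gen k :=
  fWord_of_sortDesc_eq_cons (List.perm_singleton.1 (sortDesc_perm [k]))

theorem fWord_eq_comp_erase_min {a : List ℕ} {m : ℕ} (hnd : a.Nodup) (hm : m ∈ a)
    (hmin : ∀ x ∈ a, m ≤ x) (ha : a.erase m ≠ []) :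
    fWord a = comp (fWord (a.erase m)) (uCount a m + 1) (gen m) := by
  obtain ⟨k, rest, h⟩ := List.exists_cons_of_ne_nil (sortDesc_ne_nil ha)
  have hsort : sortDesc a = k :: (rest ++ [m]) := by
    rw [sortDesc_eq_sortDesc_erase_append hm hmin, h, List.cons_append]
  rw [fWord_of_sortDesc_eq_cons hsort, fWord_of_sortDesc_eq_cons h, List.foldl_append,
    List.foldl_cons, List.foldl_nil]
  congr 1
  refine List.foldl_ext _ _ _ fun A x hx => ?_
  have hx : x ∈ a.erase m := (sortDesc_perm _).mem_iff.1 (h ▸ List.mem_cons_of_mem k hx)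
  have hmx : m < x := lt_of_le_of_ne (hmin x (List.mem_of_mem_erase hx))
    (Ne.symm ((hnd.mem_erase_iff).1 hx).1)
  rw [uCount_erase_of_lt hmx]

def fWordOpt (a : List ℕ) : Option Trm := if a = [] then none else some (fWord a)

theorem fWordOpt_nil : fWordOpt [] = none := rfl

theorem fWordOpt_of_ne_nil {a : List ℕ} (ha : a ≠ []) : fWordOpt a = some (fWord a) :=
  if_neg ha

theorem arityOpt_fWordOpt (a : List ℕ) : arityOpt (fWordOpt a) = a.length + 1 := by
  by_cases ha : a = []
  · simp [ha, fWordOpt, arityOpt]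
  · rw [fWordOpt_of_ne_nil ha, arityOpt, fWord_arity ha]

theorem fWord_eq_optComp_erase_min {a : List ℕ} {m : ℕ} (hnd : a.Nodup) (hm : m ∈ a)
    (hmin : ∀ x ∈ a, m ≤ x) :
    fWord a = optComp (fWordOpt (a.erase m)) (uCount a m + 1) (gen m) := by
  by_cases ha : a.erase m = []
  · obtain rfl : a = [m] := List.perm_singleton.1 (ha ▸ List.perm_cons_erase hm)
    rw [ha, fWord_singleton]
    rfl
  · rw [fWordOpt_of_ne_nil ha, fWord_eq_comp_erase_min hnd hm hmin ha, optComp]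

def normalForm (aL : List ℕ) (κ : ℕ) (aR : List ℕ) : Trm :=
  compOpt (compOpt (gen κ) 2 (fWordOpt aR)) 1 (fWordOpt aL)

theorem normalForm_erase_min_left {aL aR : List ℕ} {κ m : ℕ} (hnd : aL.Nodup) (hm : m ∈ aL)
    (hmin : ∀ x ∈ aL, m ≤ x) :
    IEq (comp (normalForm (aL.erase m) κ aR) (uCount aL m + 1) (gen m)) (normalForm aL κ aR) := by
  have hu := uCount_lt_length hm
  have hlen := List.length_erase_of_mem hm
  have h := IEq.assoc1_opt (compOpt (gen κ) 2 (fWordOpt aR)) (fWordOpt (aL.erase m)) (gen m)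
    1 (uCount aL m + 1) (by omega) (by rw [arityOpt_fWordOpt]; omega)
  rw [Nat.add_sub_cancel, ← fWord_eq_optComp_erase_min hnd hm hmin] at h
  rwa [normalForm, normalForm, fWordOpt_of_ne_nil (List.ne_nil_of_mem hm), compOpt]

theorem normalForm_erase_min_right {aL aR : List ℕ} {κ m : ℕ} (hnd : aR.Nodup) (hm : m ∈ aR)
    (hmin : ∀ x ∈ aR, m ≤ x) :
    IEq (comp (normalForm aL κ (aR.erase m)) (aL.length + 1 + uCount aR m + 1) (gen m))
      (normalForm aL κ aR) := by
  have hu := uCount_lt_length hm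
  have hlen := List.length_erase_of_mem hm
  calc IEq _ (compOpt (comp (compOpt (gen κ) 2 (fWordOpt (aR.erase m))) (uCount aR m + 2) (gen m))
        1 (fWordOpt aL)) := by
        have h := IEq.assoc2_opt (compOpt (gen κ) 2 (fWordOpt (aR.erase m))) (fWordOpt aL) (gen m)
          1 (aL.length + 1 + uCount aR m + 1) (by rw [arityOpt_fWordOpt]; omega)
        rwa [arityOpt_fWordOpt, show aL.length + 1 + uCount aR m + 1 - (aL.length + 1) + 1
          = uCount aR m + 2 by omega] at h
    IEq _ (compOpt (comp (gen κ) 2 (fWord aR)) 1 (fWordOpt aL)) := by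
        refine IEq.compOpt_congr ?_ 1 _
        have h := IEq.assoc1_opt (gen κ) (fWordOpt (aR.erase m)) (gen m) 2 (uCount aR m + 2)
          (by omega) (by rw [arityOpt_fWordOpt]; omega)
        rwa [show uCount aR m + 2 - 2 + 1 = uCount aR m + 1 by omega,
          ← fWord_eq_optComp_erase_min hnd hm hmin] at h
    _ = normalForm aL κ aR := by
        rw [normalForm, fWordOpt_of_ne_nil (List.ne_nil_of_mem hm), compOpt]

theorem exists_min_lt_of_forall_le {aL aR : List ℕ} {κ : ℕ} (hnd : (aL ++ κ :: aR).Nodup)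
    (hmax : ∀ x ∈ aL ++ κ :: aR, x ≤ κ) (hLR : aL ++ aR ≠ []) :
    ∃ m ∈ aL ++ aR, m < κ ∧ ∀ x ∈ aL ++ κ :: aR, m ≤ x := by
  set m := (aL ++ aR).toFinset.min' (List.toFinset_nonempty_iff _ |>.2 hLR)
  have hmLR : m ∈ aL ++ aR := List.mem_toFinset.1 (Finset.min'_mem _ _)
  have hmκ : m < κ := by
    refine lt_of_le_of_ne (hmax m (List.perm_middle.mem_iff.2 (List.mem_cons_of_mem κ hmLR))) ?_
    rintro rfl
    exact (List.nodup_cons.1 (List.nodup_middle.1 hnd)).1 hmLR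
  refine ⟨m, hmLR, hmκ, fun x hx => ?_⟩
  rcases List.mem_cons.1 (List.perm_middle.mem_iff.1 hx) with rfl | hx
  · exact hmκ.le
  · exact Finset.min'_le _ _ (List.mem_toFinset.2 hx)

theorem fWord_ieq_normalForm (aL aR : List ℕ) (κ : ℕ) (hnd : (aL ++ κ :: aR).Nodup)
    (hmax : ∀ x ∈ aL ++ κ :: aR, x ≤ κ) : IEq (fWord (aL ++ κ :: aR)) (normalForm aL κ aR) := by
  by_cases hLR : aL ++ aR = []
  · obtain ⟨rfl, rfl⟩ := List.append_eq_nil_iff.1 hLR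
    rw [List.nil_append, fWord_singleton]
    exact IEq.refl _
  obtain ⟨m, hmLR, hmκ, hmin⟩ := exists_min_lt_of_forall_le hnd hmax hLR
  have hfa := fWord_eq_comp_erase_min hnd (List.perm_middle.mem_iff.2 (List.mem_cons_of_mem κ hmLR))
    hmin (List.ne_nil_of_mem (List.mem_erase_of_ne hmκ.ne' |>.2 (by simp)))
  obtain ⟨hndL, hndR, hdisj⟩ := List.nodup_append.1 hnd
  rcases List.mem_append.1 hmLR with hmL | hmR
  · have herase : (aL ++ κ :: aR).erase m = aL.erase m ++ κ :: aR := List.erase_append_left _ hmL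
    have ih := fWord_ieq_normalForm (aL.erase m) aR κ (herase ▸ hnd.erase m)
      (fun x hx => hmax x (List.mem_of_mem_erase (herase ▸ hx)))
    rw [hfa, herase, uCount_append_of_mem hmL]
    exact (ih.congr _ (IEq.refl _)).trans
      (normalForm_erase_min_left hndL hmL fun x hx => hmin x (List.mem_append_left _ hx))
  · have hmL : m ∉ aL := fun h => hdisj m h m (List.mem_cons_of_mem κ hmR) rfl
    have herase : (aL ++ κ :: aR).erase m = aL ++ κ :: aR.erase m := by
      rw [List.erase_append_right _ hmL, List.erase_cons_tail (by simpa using hmκ.ne')]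
    have hlt : ∀ y ∈ aL, m < y := fun y hy =>
      lt_of_le_of_ne (hmin y (List.mem_append_left _ hy)) (by rintro rfl; exact hmL hy)
    have ih := fWord_ieq_normalForm aL (aR.erase m) κ (herase ▸ hnd.erase m)
      (fun x hx => hmax x (List.mem_of_mem_erase (herase ▸ hx)))
    rw [hfa, herase, uCount_append_cons_of_forall_lt hlt hmκ]
    exact (ih.congr _ (IEq.refl _)).trans (normalForm_erase_min_right (List.nodup_cons.1 hndR).2 hmR
      fun x hx => hmin x (List.mem_append_right _ (List.mem_cons_of_mem κ hx)))
termination_by aL.length + aR.length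
decreasing_by
  · have := List.length_pos_of_mem hmL
    rw [List.length_erase_of_mem hmL]
    omega
  · have := List.length_pos_of_mem hmR
    rw [List.length_erase_of_mem hmR]
    omega

theorem fWord_normalization_general (a aL aR : List ℕ) (κ : ℕ) (hnd : a.Nodup)
    (hsplit : a = aL ++ κ :: aR) (hmax : ∀ x ∈ a, x ≤ κ) :
    (aL ≠ [] → aR ≠ [] →
        IEq (fWord a) (Trm.comp (Trm.comp (Trm.gen κ) 2 (fWord aR)) 1 (fWord aL))) ∧
    (aL = [] → aR ≠ [] → IEq (fWord a) (Trm.comp (Trm.gen κ) 2 (fWord aR))) ∧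
    (aR = [] → aL ≠ [] → IEq (fWord a) (Trm.comp (Trm.gen κ) 1 (fWord aL))) ∧
    (a = [κ] → fWord a = Trm.gen κ) := by
  subst hsplit
  have h := fWord_ieq_normalForm aL aR κ hnd hmax
  refine ⟨fun hL hR => ?_, fun hL hR => ?_, fun hR hL => ?_, fun ha => by rw [ha, fWord_singleton]⟩
  · rwa [normalForm, fWordOpt_of_ne_nil hL, fWordOpt_of_ne_nil hR] at h
  · subst hL
    rwa [normalForm, fWordOpt_nil, fWordOpt_of_ne_nil hR] at h
  · subst hR
    rwa [normalForm, fWordOpt_nil, fWordOpt_of_ne_nil hL] at h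

theorem fWord_normalization (a aL aR : List ℕ) (κ : ℕ) (hnd : a.Nodup)
    (hpos : ∀ x ∈ a, 0 < x) (hsplit : a = aL ++ κ :: aR) (hmax : ∀ x ∈ a, x ≤ κ) :
    (aL ≠ [] → aR ≠ [] →
        IEq (fWord a) (Trm.comp (Trm.comp (Trm.gen κ) 2 (fWord aR)) 1 (fWord aL))) ∧
    (aL = [] → aR ≠ [] → IEq (fWord a) (Trm.comp (Trm.gen κ) 2 (fWord aR))) ∧
    (aR = [] → aL ≠ [] → IEq (fWord a) (Trm.comp (Trm.gen κ) 1 (fWord aL))) ∧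
    (a = [κ] → fWord a = Trm.gen κ) :=
  fWord_normalization_general a aL aR κ hnd hsplit hmax
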